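/- Let U ⊆ ℝ² be a set such that both U and its complement Uᶜ contain a parabolic region. Then there exist a continuous map γ : ℝ → ℝ² with ‖γ(t)‖ → ∞ as |t| → ∞, a real number T > 0, and constants c > 0 and ρ > 0, such that: γ(t) ∈ U for all t ≥ T; γ(t) ∈ Uᶜ for all t ≤ −T; and 1 + d(x, ∂U) + d(x, Γ) ≥ ‖x‖^c for all x ∈ ℝ² with ‖x‖ ≥ ρ, where Γ = γ(ℝ) is the range of γ. -/

import Mathlib

open Metric Set Filter

noncomputable section

/-- A parabolic region in the Euclidean plane: the image under a rigid motion
(surjective isometry) of `{y : y₁ ≥ 0, |y₂| ≤ y₁^α}` for some `α > 0`. -/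
def IsParabolicRegion (P : Set (EuclideanSpace ℝ (Fin 2))) : Prop :=
  ∃ α : ℝ, 0 < α ∧ ∃ M : EuclideanSpace ℝ (Fin 2) ≃ᵢ EuclideanSpace ℝ (Fin 2),
    P = M '' {y : EuclideanSpace ℝ (Fin 2) | 0 ≤ y 0 ∧ |y 1| ≤ (y 0) ^ α}

/-!
Take a parabolic region in `U` and one in `Uᶜ`, and let `γ` come in from infinity along the axis
of the second, cross over along a segment, and go out to infinity along the axis of the first.
The axis point at distance `s ≥ 2` from the vertex of `{|y₂| ≤ y₁ ^ α}` is the centre of a ball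
of radius `(s / 2) ^ β`, `β = min α 1`, inside the region, so it is that far from `∂U`. A far
point `x` is either at distance `≳ ‖x‖` from `Γ`, or within `d(x, Γ) + 1` of some `γ t` with
`|t| ≳ ‖x‖`, and then `1 + d(x, ∂U) + d(x, Γ) ≥ d(γ t, ∂U) ≳ ‖x‖ ^ β`.
-/

local notation "ℝ²" => EuclideanSpace ℝ (Fin 2)

theorem le_infDist_frontier_of_ball_subset {X : Type*} [PseudoMetricSpace X] {V : Set X} {z : X}
    {r : ℝ} (hV : (frontier V).Nonempty) (h : ball z r ⊆ V) : r ≤ infDist z (frontier V) := by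
  refine (le_infDist hV).2 fun y hy => not_lt.1 fun hyz => ?_
  exact hy.2 (interior_maximal h isOpen_ball (mem_ball'.2 hyz))

theorem Real.rpow_half_le_div_eight_rpow {r β : ℝ} (hr : 64 ≤ r) (hβ : 0 ≤ β) :
    r ^ (β / 2) ≤ (r / 8) ^ β := by
  have h8 : 8 ≤ √r := Real.le_sqrt_of_sq_le (by linarith)
  have hsqrt : √r ≤ r / 8 := by nlinarith [Real.sq_sqrt (by linarith : (0:ℝ) ≤ r)]
  calc r ^ (β / 2) = √r ^ β := by
        rw [Real.sqrt_eq_rpow, ← Real.rpow_mul (by linarith)]; ring_nf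
    _ ≤ (r / 8) ^ β := Real.rpow_le_rpow (Real.sqrt_nonneg r) hsqrt hβ

section Rays

variable {E : Type*} [NormedAddCommGroup E]

theorem Isometry.norm_le_abs_add {f : ℝ → E} (hf : Isometry f) (s : ℝ) :
    ‖f s‖ ≤ |s| + ‖f 0‖ := by
  have := hf.dist_eq s 0
  rw [dist_eq_norm, Real.dist_eq, sub_zero] at this
  linarith [norm_le_norm_add_norm_sub' (f s) (f 0)]

theorem Isometry.abs_sub_le_norm {f : ℝ → E} (hf : Isometry f) (s : ℝ) :
    |s| - ‖f 0‖ ≤ ‖f s‖ := by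
  have := hf.dist_eq s 0
  rw [dist_eq_norm, Real.dist_eq, sub_zero] at this
  linarith [norm_sub_le (f s) (f 0)]

variable [NormedSpace ℝ E]

/-- Runs along `f` backwards for `t ≤ -1`, along the segment from `f 1` to `g 1`, then along
`g` for `t ≥ 1`. -/
def joinRays (f g : ℝ → E) (t : ℝ) : E :=
  (1 - max 0 (min 1 ((t + 1) / 2))) • f |t| + max 0 (min 1 ((t + 1) / 2)) • g |t|

theorem joinRays_of_one_le (f g : ℝ → E) {t : ℝ} (ht : 1 ≤ t) : joinRays f g t = g t := by
  have : min 1 ((t + 1) / 2) = 1 := min_eq_left (by linarith)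
  simp [joinRays, this, abs_of_pos (by linarith : 0 < t)]

theorem joinRays_of_le_neg_one (f g : ℝ → E) {t : ℝ} (ht : t ≤ -1) :
    joinRays f g t = f (-t) := by
  have : min 1 ((t + 1) / 2) = (t + 1) / 2 := min_eq_right (by linarith)
  simp [joinRays, this, max_eq_left (by linarith : (t + 1) / 2 ≤ 0),
    abs_of_neg (by linarith : t < 0)]

theorem continuous_joinRays {f g : ℝ → E} (hf : Continuous f) (hg : Continuous g) :
    Continuous (joinRays f g) := by
  unfold joinRays
  fun_prop

theorem norm_joinRays_le {f g : ℝ → E} (hf : Isometry f) (hg : Isometry g) (t : ℝ) :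
    ‖joinRays f g t‖ ≤ |t| + max ‖f 0‖ ‖g 0‖ := by
  set σ := max 0 (min 1 ((t + 1) / 2))
  have hσ1 : σ ≤ 1 := max_le zero_le_one (min_le_left _ _)
  rw [← mem_closedBall_zero_iff]
  refine convex_closedBall 0 _ ?_ ?_ (sub_nonneg.2 hσ1) (le_max_left _ _) (sub_add_cancel 1 σ)
  · exact mem_closedBall_zero_iff.2 ((hf.norm_le_abs_add _).trans (by simp))
  · exact mem_closedBall_zero_iff.2 ((hg.norm_le_abs_add _).trans (by simp))

theorem tendsto_norm_joinRays {f g : ℝ → E} (hf : Isometry f) (hg : Isometry g) :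
    Tendsto (fun t => ‖joinRays f g t‖) (cocompact ℝ) atTop := by
  set A := max ‖f 0‖ ‖g 0‖
  refine tendsto_atTop_mono' _ ?_
    (tendsto_atTop_add_const_right _ (-A) tendsto_norm_cocompact_atTop)
  filter_upwards [tendsto_norm_cocompact_atTop.eventually_ge_atTop 1] with t ht
  rw [Real.norm_eq_abs] at ht
  rcases le_abs'.1 ht with ht | ht
  · rw [joinRays_of_le_neg_one f g (by linarith)]
    have := hf.abs_sub_le_norm (-t)
    simp only [abs_neg, Real.norm_eq_abs] at this ⊢
    linarith [le_max_left ‖f 0‖ ‖g 0‖]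
  · rw [joinRays_of_one_le f g ht]
    have := hg.abs_sub_le_norm t
    simp only [Real.norm_eq_abs]
    linarith [le_max_right ‖f 0‖ ‖g 0‖]

theorem le_infDist_frontier_joinRays {U : Set E} {f g : ℝ → E} {r : ℝ → ℝ}
    (hU : (frontier U).Nonempty)
    (hf : ∀ s, 2 ≤ s → ball (f s) (r s) ⊆ Uᶜ) (hg : ∀ s, 2 ≤ s → ball (g s) (r s) ⊆ U)
    {t : ℝ} (ht : 2 ≤ |t|) : r |t| ≤ infDist (joinRays f g t) (frontier U) := by
  rcases le_abs'.1 ht with ht | ht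
  · rw [joinRays_of_le_neg_one f g (by linarith), abs_of_neg (by linarith), ← frontier_compl]
    exact le_infDist_frontier_of_ball_subset (by rwa [frontier_compl]) (hf _ (by linarith))
  · rw [joinRays_of_one_le f g (by linarith), abs_of_pos (by linarith)]
    exact le_infDist_frontier_of_ball_subset hU (hg t ht)

end Rays

theorem div_eight_rpow_le_one_add_infDist_add_infDist_range {E : Type*} [NormedAddCommGroup E]
    {γ : ℝ → E} {F : Set E} {A β : ℝ} (hγ : ∀ t, ‖γ t‖ ≤ |t| + A) (hβ₀ : 0 ≤ β) (hβ₁ : β ≤ 1)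
    (hF : ∀ t, 2 ≤ |t| → (|t| / 2) ^ β ≤ infDist (γ t) F) {x : E} (hx : 4 * A + 8 ≤ ‖x‖) :
    (‖x‖ / 8) ^ β ≤ 1 + infDist x F + infDist x (range γ) := by
  have hA : 0 ≤ A := by simpa using (norm_nonneg _).trans (hγ 0)
  obtain ⟨_, ⟨t, rfl⟩, hxt⟩ :=
    (infDist_lt_iff (range_nonempty γ)).1 (lt_add_one (infDist x (range γ)))
  have hF₀ := infDist_nonneg (x := x) (s := F)
  rcases le_or_gt (‖x‖ / 2) (infDist x (range γ) + 1) with hfar | hnear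
  · calc (‖x‖ / 8) ^ β ≤ (‖x‖ / 8) ^ (1 : ℝ) :=
          Real.rpow_le_rpow_of_exponent_le (by linarith) hβ₁
      _ ≤ 1 + infDist x F + infDist x (range γ) := by rw [Real.rpow_one]; linarith
  · have ht : ‖x‖ / 4 + 2 ≤ |t| := by
      linarith [hγ t, norm_le_norm_add_norm_sub' x (γ t), dist_eq_norm x (γ t)]
    calc (‖x‖ / 8) ^ β ≤ (|t| / 2) ^ β := Real.rpow_le_rpow (by positivity) (by linarith) hβ₀
      _ ≤ infDist (γ t) F := hF t (by linarith)
      _ ≤ infDist x F + dist (γ t) x := infDist_le_infDist_add_dist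
      _ ≤ 1 + infDist x F + infDist x (range γ) := by linarith [dist_comm x (γ t)]

theorem ball_single_subset_parabola {α s r : ℝ} (hα : 0 ≤ α) (hrs : r ≤ s / 2)
    (hrα : r ≤ (s / 2) ^ α) :
    ball (EuclideanSpace.single 0 s : ℝ²) r ⊆ {y : ℝ² | 0 ≤ y 0 ∧ |y 1| ≤ y 0 ^ α} := by
  intro z hz
  have h₀ := (PiLp.dist_apply_le z _ 0).trans_lt hz
  have h₁ := (PiLp.dist_apply_le z _ 1).trans_lt hz
  simp only [PiLp.single_apply, if_true, Real.dist_eq] at h₀ h₁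
  norm_num at h₁
  have hs : 0 ≤ s / 2 := by linarith [abs_nonneg (z 0 - s)]
  have hz₀ : s / 2 ≤ z 0 := by linarith [(abs_lt.1 h₀).1]
  exact ⟨hs.trans hz₀, h₁.le.trans (hrα.trans (Real.rpow_le_rpow hs hz₀ hα))⟩

theorem IsParabolicRegion.exists_isometry_ball_subset {P : Set ℝ²} (hP : IsParabolicRegion P) :
    ∃ α : ℝ, 0 < α ∧ ∃ a : ℝ → ℝ², Isometry a ∧
      ∀ β s : ℝ, β ≤ 1 → β ≤ α → 2 ≤ s → ball (a s) ((s / 2) ^ β) ⊆ P := by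
  obtain ⟨α, hα, M, rfl⟩ := hP
  have ha : Isometry fun s : ℝ => M (EuclideanSpace.single 0 s) :=
    M.isometry.comp <| Isometry.of_dist_eq fun a b =>
      PiLp.dist_single_same 2 (fun _ : Fin 2 => ℝ) 0 a b
  refine ⟨α, hα, _, ha, fun β s hβ₁ hβα hs => ?_⟩
  have hs' : 1 ≤ s / 2 := by linarith
  rw [← M.image_ball]
  exact image_mono (ball_single_subset_parabola hα.le
    ((Real.rpow_le_rpow_of_exponent_le hs' hβ₁).trans_eq (Real.rpow_one _))
    (Real.rpow_le_rpow_of_exponent_le hs' hβα))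

theorem exists_transverse_curve (U : Set (EuclideanSpace ℝ (Fin 2)))
    (hU : ∃ P, IsParabolicRegion P ∧ P ⊆ U)
    (hUc : ∃ P, IsParabolicRegion P ∧ P ⊆ Uᶜ) :
    ∃ (γ : ℝ → EuclideanSpace ℝ (Fin 2)) (T c ρ : ℝ),
      Continuous γ ∧
      Tendsto (fun t => ‖γ t‖) (cocompact ℝ) atTop ∧
      0 < T ∧ 0 < c ∧ 0 < ρ ∧
      (∀ t : ℝ, T ≤ t → γ t ∈ U) ∧
      (∀ t : ℝ, t ≤ -T → γ t ∈ Uᶜ) ∧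
      (∀ x : EuclideanSpace ℝ (Fin 2), ρ ≤ ‖x‖ →
        ‖x‖ ^ c ≤ 1 + infDist x (frontier U) + infDist x (Set.range γ)) := by
  obtain ⟨P₁, hP₁, hP₁U⟩ := hU
  obtain ⟨P₂, hP₂, hP₂U⟩ := hUc
  obtain ⟨α₁, hα₁, g, hg, hgP⟩ := hP₁.exists_isometry_ball_subset
  obtain ⟨α₂, hα₂, f, hf, hfP⟩ := hP₂.exists_isometry_ball_subset
  set β := min (min α₁ α₂) 1
  have hβ : 0 < β := lt_min (lt_min hα₁ hα₂) one_pos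
  have hgU : ∀ s, 2 ≤ s → ball (g s) ((s / 2) ^ β) ⊆ U := fun s hs =>
    (hgP β s (min_le_right _ _) ((min_le_left _ _).trans (min_le_left _ _)) hs).trans hP₁U
  have hfU : ∀ s, 2 ≤ s → ball (f s) ((s / 2) ^ β) ⊆ Uᶜ := fun s hs =>
    (hfP β s (min_le_right _ _) ((min_le_left _ _).trans (min_le_right _ _)) hs).trans hP₂U
  have hcenter : ∀ s : ℝ, 2 ≤ s → 0 < (s / 2) ^ β := fun s hs => by
    apply Real.rpow_pos_of_pos; linarith
  have hfr : (frontier U).Nonempty := nonempty_frontier_iff.2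
    ⟨⟨_, hgU 2 le_rfl (mem_ball_self (hcenter 2 le_rfl))⟩,
      fun h => hfU 2 le_rfl (mem_ball_self (hcenter 2 le_rfl)) (h ▸ mem_univ _)⟩
  refine ⟨joinRays f g, 2, β / 2, 4 * max ‖f 0‖ ‖g 0‖ + 64,
    continuous_joinRays hf.continuous hg.continuous, tendsto_norm_joinRays hf hg, two_pos,
    by positivity, by positivity, fun t ht => ?_, fun t ht => ?_, fun x hx => ?_⟩
  · rw [joinRays_of_one_le f g (by linarith)]
    exact hgU t ht (mem_ball_self (hcenter t ht))
  · rw [joinRays_of_le_neg_one f g (by linarith)]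
    exact hfU (-t) (by linarith) (mem_ball_self (hcenter (-t) (by linarith)))
  · calc ‖x‖ ^ (β / 2) ≤ (‖x‖ / 8) ^ β :=
          Real.rpow_half_le_div_eight_rpow
            (by linarith [le_max_left ‖f 0‖ ‖g 0‖, norm_nonneg (f 0)]) hβ.le
      _ ≤ _ := div_eight_rpow_le_one_add_infDist_add_infDist_range (norm_joinRays_le hf hg)
          hβ.le (min_le_right _ _) (fun t ht => le_infDist_frontier_joinRays hfr hfU hgU ht)
          (by linarith)
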